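/- Let R be an unambiguous regex over Σ. Then the star R* is infinitely ambiguous if and only if ε ∈ L(R) or the languages L(R) and L(R*) overlap. (Paper's Theorem 3(a), Ambiguity of Star.) -/

import Mathlib

/-! Shared definitions: words, word power, parse trees of regular expressions,
(un)ambiguity, finite/infinite ambiguity, and the Brabrand–Thomsen overlap. -/

universe u

variable {α : Type u}

/-- `wpow w n` is the `n`-fold concatenation `w^n` of the word `w` with itself. -/
def wpow (w : List α) : ℕ → List α
  | 0 => []
  | n + 1 => w ++ wpow w n

/-- Parse trees of a regular expression for a word, defined inductively:
the regex `ε` has a unique parse tree for the empty word; the character regex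
for `a` has a unique parse tree for the word `[a]`; a parse tree of `R₁ + R₂`
(alternation) for `w` is a parse tree of `R₁` for `w` or a parse tree of `R₂`
for `w` (the two sides distinct); a parse tree of `R₁ * R₂` (concatenation)
for `w` is a decomposition `w = u ++ v` with parse trees of `R₁` for `u` and
of `R₂` for `v`; a parse tree of `R*` for `w` is a finite list of words
(possibly empty entries) concatenating to `w` with a parse tree of `R` for each. -/
inductive ParseTree : RegularExpression α → List α → Type u where
  | eps : ParseTree RegularExpression.epsilon []
  | char (a : α) : ParseTree (RegularExpression.char a) [a]
  | plusLeft {R₁ R₂ : RegularExpression α} {w : List α} :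
      ParseTree R₁ w → ParseTree (R₁ + R₂) w
  | plusRight {R₁ R₂ : RegularExpression α} {w : List α} :
      ParseTree R₂ w → ParseTree (R₁ + R₂) w
  | comp {R₁ R₂ : RegularExpression α} {u v : List α} :
      ParseTree R₁ u → ParseTree R₂ v → ParseTree (R₁ * R₂) (u ++ v)
  | starNil {R : RegularExpression α} : ParseTree R.star []
  | starCons {R : RegularExpression α} {u v : List α} :
      ParseTree R u → ParseTree R.star v → ParseTree R.star (u ++ v)

/-- A regex is unambiguous if every word has at most one parse tree of it. -/
def Unambiguous (R : RegularExpression α) : Prop :=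
  ∀ (w : List α) (t₁ t₂ : ParseTree R w), t₁ = t₂

/-- A regex is ambiguous if some word has two distinct parse trees of it. -/
def Ambiguous (R : RegularExpression α) : Prop :=
  ∃ (w : List α) (t₁ t₂ : ParseTree R w), t₁ ≠ t₂

/-- The word `w` has at least `k` distinct parse trees of `R`. -/
def HasAtLeastTrees (R : RegularExpression α) (w : List α) (k : ℕ) : Prop :=
  ∃ l : List (ParseTree R w), l.Nodup ∧ k ≤ l.length

/-- Every word has at most `k` parse trees of `R`. -/
def BoundedBy (R : RegularExpression α) (k : ℕ) : Prop :=
  ∀ (w : List α) (l : List (ParseTree R w)), l.Nodup → l.length ≤ k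

/-- `R` is finitely ambiguous: ambiguous, with a uniform bound on the number
of parse trees of any word. -/
def FinitelyAmbiguous (R : RegularExpression α) : Prop :=
  Ambiguous R ∧ ∃ k : ℕ, BoundedBy R k

/-- `R` is infinitely ambiguous: for every `k` some word has more than `k`
parse trees of `R`. -/
def InfinitelyAmbiguous (R : RegularExpression α) : Prop :=
  ∀ k : ℕ, ∃ w : List α, HasAtLeastTrees R w (k + 1)

/-- Languages `L₁` and `L₂` overlap (nonemptiness of the Brabrand–Thomsen
overlap operator): there are words `x`, `y` and a nonempty word `a` with
`x ∈ L₁`, `x ++ a ∈ L₁`, `a ++ y ∈ L₂`, and `y ∈ L₂`. -/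
def Overlaps (L₁ L₂ : Language α) : Prop :=
  ∃ x y a : List α, a ≠ [] ∧ x ∈ L₁ ∧ x ++ a ∈ L₁ ∧ a ++ y ∈ L₂ ∧ y ∈ L₂

/-!
If `ε ∈ L(R)`, the star can insert empty factors anywhere; if `x, xa ∈ L(R)` and `ay, y ∈ L(R*)`,
the word `xay` has two star factorizations. Either way one word `w` has two distinct factorizations
`p ≠ q` into words of `L(R)`, and then `w^k` has the `k + 1` distinct factorizations
`p^j q^(k-j)`, each carried by its own parse tree of `R*`. Conversely, a parse tree of `R*` is
determined by its factorization when `R` is unambiguous, and without empty factors and overlaps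
the first factor of a factorization is determined by the word, so `R*` is unambiguous.
-/

open scoped Computability

section Words

variable {β : Type*}

theorem wpow_add (w : List β) (m n : ℕ) : wpow w (m + n) = wpow w m ++ wpow w n := by
  induction m with
  | zero => simp [wpow]
  | succ m ih => rw [Nat.succ_add, wpow, wpow, ih, List.append_assoc]

theorem length_wpow (w : List β) (n : ℕ) : (wpow w n).length = n * w.length := by
  induction n with
  | zero => simp [wpow]
  | succ n ih => rw [wpow, List.length_append, ih, Nat.succ_mul, Nat.add_comm]

theorem mem_of_mem_wpow {w : List β} {x : β} {n : ℕ} (h : x ∈ wpow w n) : x ∈ w := by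
  induction n with
  | zero => simp [wpow] at h
  | succ n ih => rcases List.mem_append.mp h with h | h <;> [exact h; exact ih h]

theorem flatten_wpow (S : List (List β)) (n : ℕ) : (wpow S n).flatten = wpow S.flatten n := by
  induction n with
  | zero => rfl
  | succ n ih => rw [wpow, wpow, List.flatten_append, ih]

theorem eq_of_wpow_append_eq_wpow {p q : List β} {n m : ℕ}
    (h : wpow p (n + 1) ++ wpow q m = wpow q (n + 1 + m)) : p = q := by
  have hlen : p.length = q.length := by
    have := congrArg List.length h
    simp only [List.length_append, length_wpow] at this
    exact Nat.eq_of_mul_eq_mul_left n.succ_pos (by linarith)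
  rw [wpow, Nat.add_right_comm, wpow, List.append_assoc] at h
  simpa [hlen] using congrArg (List.take q.length) h

theorem wpow_append_wpow_ne {p q : List β} (hpq : p ≠ q) {k i j : ℕ} (hij : i < j)
    (hj : j ≤ k) : wpow p i ++ wpow q (k - i) ≠ wpow p j ++ wpow q (k - j) := by
  obtain ⟨n, rfl⟩ : ∃ n, j = i + (n + 1) := ⟨j - i - 1, by omega⟩
  obtain ⟨m, rfl⟩ : ∃ m, k = i + (n + 1) + m := ⟨k - (i + (n + 1)), by omega⟩
  rw [show i + (n + 1) + m - i = n + 1 + m by omega,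
    show i + (n + 1) + m - (i + (n + 1)) = m by omega, wpow_add p i, List.append_assoc]
  exact fun h => hpq (eq_of_wpow_append_eq_wpow (List.append_cancel_left h).symm)

theorem wpow_append_wpow_injective {p q : List β} (hpq : p ≠ q) {k i j : ℕ} (hi : i ≤ k)
    (hj : j ≤ k) (h : wpow p i ++ wpow q (k - i) = wpow p j ++ wpow q (k - j)) : i = j := by
  rcases lt_trichotomy i j with hij | hij | hij
  · exact absurd h (wpow_append_wpow_ne hpq hij hj)
  · exact hij
  · exact absurd h.symm (wpow_append_wpow_ne hpq hij hi)

end Words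

namespace ParseTree

theorem mem_matches' {R : RegularExpression α} {w : List α} (t : ParseTree R w) :
    w ∈ R.matches' := by
  induction t with
  | eps => rfl
  | char a => rfl
  | plusLeft _ ih => exact Or.inl ih
  | plusRight _ ih => exact Or.inr ih
  | comp _ _ ih₁ ih₂ => exact Language.append_mem_mul ih₁ ih₂
  | starNil => exact Language.nil_mem_kstar _
  | starCons _ _ ih₁ ih₂ =>
    obtain ⟨S, rfl, hS⟩ := Language.mem_kstar.mp ih₂
    exact Language.mem_kstar.mpr ⟨_ :: S, rfl, List.forall_mem_cons.mpr ⟨ih₁, hS⟩⟩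

def factors {R : RegularExpression α} : {w : List α} → ParseTree R.star w → List (List α)
  | _, starNil => []
  | _, starCons (u := u) _ s => u :: s.factors

theorem flatten_factors {R : RegularExpression α} :
    ∀ {w : List α} (s : ParseTree R.star w), s.factors.flatten = w
  | _, starNil => by rw [factors, List.flatten_nil]
  | _, starCons _ s => by rw [factors, List.flatten_cons, flatten_factors s]

theorem mem_matches'_of_mem_factors {R : RegularExpression α} :
    ∀ {w : List α} (s : ParseTree R.star w), ∀ u ∈ s.factors, u ∈ R.matches'
  | _, starNil => by simp [factors]
  | _, starCons t s => by
    rw [factors]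
    exact List.forall_mem_cons.mpr ⟨t.mem_matches', mem_matches'_of_mem_factors s⟩

theorem exists_factors_eq {R : RegularExpression α} :
    ∀ {S : List (List α)}, (∀ u ∈ S, Nonempty (ParseTree R u)) →
      ∃ s : ParseTree R.star S.flatten, s.factors = S
  | [], _ => ⟨starNil, by rw [factors]⟩
  | u :: S, h => by
    obtain ⟨t⟩ := h u List.mem_cons_self
    obtain ⟨s, hs⟩ := exists_factors_eq fun v hv => h v (List.mem_cons_of_mem u hv)
    exact ⟨starCons t s, by rw [factors, hs]⟩

theorem nonempty_of_mem_matches' : ∀ {R : RegularExpression α} {w : List α},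
    w ∈ R.matches' → Nonempty (ParseTree R w)
  | .zero, _, hw => hw.elim
  | .epsilon, _, rfl => ⟨eps⟩
  | .char a, _, rfl => ⟨char a⟩
  | .plus _ _, _, .inl hw => ⟨plusLeft (nonempty_of_mem_matches' hw).some⟩
  | .plus _ _, _, .inr hw => ⟨plusRight (nonempty_of_mem_matches' hw).some⟩
  | .comp _ _, _, ⟨_, hu, _, hv, rfl⟩ =>
    ⟨comp (nonempty_of_mem_matches' hu).some (nonempty_of_mem_matches' hv).some⟩
  | .star _, _, hw => by
    obtain ⟨S, rfl, hS⟩ := Language.mem_kstar.mp hw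
    exact ⟨(exists_factors_eq fun u hu => nonempty_of_mem_matches' (hS u hu)).choose⟩

theorem sigma_eq_of_factors_eq {R : RegularExpression α} (hR : Unambiguous R) :
    ∀ {w₁ w₂ : List α} (s₁ : ParseTree R.star w₁) (s₂ : ParseTree R.star w₂),
      s₁.factors = s₂.factors → (⟨w₁, s₁⟩ : Σ w, ParseTree R.star w) = ⟨w₂, s₂⟩
  | _, _, starNil, starNil, _ => rfl
  | _, _, starNil, starCons _ _, h => by simp [factors] at h
  | _, _, starCons _ _, starNil, h => by simp [factors] at h
  | _, _, starCons t₁ s₁, starCons t₂ s₂, h => by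
    rw [factors, factors, List.cons.injEq] at h
    obtain ⟨rfl, h⟩ := h
    obtain ⟨rfl, hs⟩ := Sigma.mk.inj (sigma_eq_of_factors_eq hR s₁ s₂ h)
    rw [eq_of_heq hs, hR _ t₁ t₂]

theorem eq_of_factors_eq {R : RegularExpression α} (hR : Unambiguous R) {w : List α}
    {s₁ s₂ : ParseTree R.star w} (h : s₁.factors = s₂.factors) : s₁ = s₂ :=
  eq_of_heq (Sigma.mk.inj (sigma_eq_of_factors_eq hR s₁ s₂ h)).2

end ParseTree

theorem eq_of_append_eq_append_of_not_overlaps {L M : Language α} (hov : ¬ Overlaps L M)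
    {u₁ u₂ y₁ y₂ : List α} (hu₁ : u₁ ∈ L) (hu₂ : u₂ ∈ L) (hy₁ : y₁ ∈ M) (hy₂ : y₂ ∈ M)
    (h : u₁ ++ y₁ = u₂ ++ y₂) : u₁ = u₂ := by
  rcases List.append_eq_append_iff.mp h with ⟨a, rfl, rfl⟩ | ⟨a, rfl, rfl⟩
  · by_cases ha : a = []
    · rw [ha, List.append_nil]
    · exact (hov ⟨u₁, y₂, a, ha, hu₁, hu₂, hy₁, hy₂⟩).elim
  · by_cases ha : a = []
    · rw [ha, List.append_nil]
    · exact (hov ⟨u₂, y₁, a, ha, hu₂, hu₁, hy₂, hy₁⟩).elim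

theorem eq_of_flatten_eq_of_not_overlaps {L : Language α} (hε : [] ∉ L)
    (hov : ¬ Overlaps L L∗) :
    ∀ {S₁ S₂ : List (List α)}, (∀ u ∈ S₁, u ∈ L) → (∀ u ∈ S₂, u ∈ L) →
      S₁.flatten = S₂.flatten → S₁ = S₂
  | [], [], _, _, _ => rfl
  | [], u :: _, _, h₂, h =>
    (hε ((List.append_eq_nil_iff.mp h.symm).1 ▸ h₂ u List.mem_cons_self)).elim
  | u :: _, [], h₁, _, h =>
    (hε ((List.append_eq_nil_iff.mp h).1 ▸ h₁ u List.mem_cons_self)).elim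
  | u₁ :: S₁, u₂ :: S₂, h₁, h₂, h => by
    rw [List.forall_mem_cons] at h₁ h₂
    obtain rfl := eq_of_append_eq_append_of_not_overlaps hov h₁.1 h₂.1
      (Language.mem_kstar.mpr ⟨S₁, rfl, h₁.2⟩) (Language.mem_kstar.mpr ⟨S₂, rfl, h₂.2⟩) h
    rw [eq_of_flatten_eq_of_not_overlaps hε hov h₁.2 h₂.2 (List.append_cancel_left h)]

theorem unambiguous_star {R : RegularExpression α} (hR : Unambiguous R) (hε : [] ∉ R.matches')
    (hov : ¬ Overlaps R.matches' R.star.matches') : Unambiguous R.star := fun _ s₁ s₂ =>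
  ParseTree.eq_of_factors_eq hR <| eq_of_flatten_eq_of_not_overlaps hε
    (by rwa [RegularExpression.matches'_star] at hov)
    s₁.mem_matches'_of_mem_factors s₂.mem_matches'_of_mem_factors
    (by rw [s₁.flatten_factors, s₂.flatten_factors])

theorem Unambiguous.not_infinitelyAmbiguous {R : RegularExpression α} (hR : Unambiguous R) :
    ¬ InfinitelyAmbiguous R := fun h => by
  obtain ⟨w, l, hnd, hlen⟩ := h 1
  match l, hnd, hlen with
  | t₁ :: t₂ :: _, hnd, _ => exact (List.nodup_cons.mp hnd).1 (hR w t₁ t₂ ▸ List.mem_cons_self)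

theorem infinitelyAmbiguous_star_of_factorizations {R : RegularExpression α}
    {p q : List (List α)} (hpq : p ≠ q) (hflat : p.flatten = q.flatten)
    (hp : ∀ u ∈ p, u ∈ R.matches') (hq : ∀ u ∈ q, u ∈ R.matches') :
    InfinitelyAmbiguous R.star := by
  intro k
  have htree (j : Fin (k + 1)) :
      ∃ s : ParseTree R.star (wpow p.flatten k), s.factors = wpow p j ++ wpow q (k - j) := by
    have hw : (wpow p j ++ wpow q (k - j)).flatten = wpow p.flatten k := by
      rw [List.flatten_append, flatten_wpow, flatten_wpow, ← hflat, ← wpow_add,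
        Nat.add_sub_cancel' j.is_le]
    rw [← hw]
    refine ParseTree.exists_factors_eq fun u hu => ParseTree.nonempty_of_mem_matches' ?_
    rcases List.mem_append.mp hu with hu | hu
    exacts [hp u (mem_of_mem_wpow hu), hq u (mem_of_mem_wpow hu)]
  choose t ht using htree
  refine ⟨_, (List.finRange (k + 1)).map t,
    (List.nodup_finRange _).map fun i j hij => Fin.ext ?_, by simp⟩
  exact wpow_append_wpow_injective hpq i.is_le j.is_le (by rw [← ht, ← ht, hij])

theorem infinitelyAmbiguous_star_of_nil_mem {R : RegularExpression α} (hε : [] ∈ R.matches') :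
    InfinitelyAmbiguous R.star :=
  infinitelyAmbiguous_star_of_factorizations (p := []) (q := [[]]) (List.cons_ne_nil _ _).symm
    rfl (by simp) (by simpa using hε)

theorem infinitelyAmbiguous_star_of_overlaps {R : RegularExpression α}
    (hov : Overlaps R.matches' R.star.matches') : InfinitelyAmbiguous R.star := by
  obtain ⟨x, y, a, ha, hx, hxa, hay, hy⟩ := hov
  rw [RegularExpression.matches'_star] at hay hy
  obtain ⟨S₁, hS₁, hS₁R⟩ := Language.mem_kstar.mp hay
  obtain ⟨S₂, hS₂, hS₂R⟩ := Language.mem_kstar.mp hy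
  refine infinitelyAmbiguous_star_of_factorizations (p := x :: S₁) (q := (x ++ a) :: S₂) ?_ ?_
    (List.forall_mem_cons.mpr ⟨hx, hS₁R⟩) (List.forall_mem_cons.mpr ⟨hxa, hS₂R⟩)
  · simp [ha]
  · simp [← hS₁, ← hS₂]

/-- Theorem 3(a): for unambiguous `R`, the star `R*` is infinitely ambiguous
iff `ε ∈ L(R)` or `L(R)` and `L(R*)` overlap. -/
theorem stmt_4 {α : Type u} (R : RegularExpression α) (h : Unambiguous R) :
    InfinitelyAmbiguous R.star ↔
      ([] ∈ R.matches' ∨ Overlaps R.matches' R.star.matches') := by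
  refine ⟨fun hinf => ?_, ?_⟩
  · by_contra! hcon
    exact (unambiguous_star h hcon.1 hcon.2).not_infinitelyAmbiguous hinf
  · rintro (hε | hov)
    exacts [infinitelyAmbiguous_star_of_nil_mem hε, infinitelyAmbiguous_star_of_overlaps hov]
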